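/- arXiv:1806.10044 — 3 statements merged into one kernel-verified Lean document; each statement's English description precedes it below -/
import Mathlib

section
/- Let n > 1 be an integer, and let â = (0,0), c, and b̂ be points such that c and â lie on the grid nℤ × nℤ (the coarse n × n grid scaled by n), with y(c) − y(â) ≥ n, x(c) − x(â) ≤ (n−1)·n, and b̂ a point with integer coordinates satisfying x(b̂) − x(c) ≥ 1 and y(b̂) = y(c). Let q be the intersection of segment âb̂ with the vertical line through c. Then y(c) − y(q) ≥ n/(n² − n + 1) > 1/n. -/
/-- Key estimate for dependent bend points (Lemma 7 of the 1-planar RAC₂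
algorithm).  With `â = (0,0)`, a point `c = (cx, cy)` on the grid `nℤ × nℤ`
satisfying `cy − 0 ≥ n` and `cx − 0 ≤ (n−1)·n` (and `cx ≥ 0`), and a lattice
point `b̂ = (bx, cy)` with `bx − cx ≥ 1`, let `q` be the intersection of the
segment `â b̂` with the vertical line through `c`, so `y(q) = cy·cx/bx`.
Then `y(c) − y(q) ≥ n/(n² − n + 1) > 1/n`. -/
theorem dependent_bend_point_gap (n cx cy bx : ℤ) (hn : 1 < n)
    (hcx_grid : n ∣ cx) (hcy_grid : n ∣ cy)
    (hcx0 : 0 ≤ cx) (hcy : n ≤ cy) (hcx : cx ≤ (n - 1) * n)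
    (hbx : cx + 1 ≤ bx) :
    (cy : ℚ) - (cy : ℚ) * cx / bx ≥ (n : ℚ) / (n ^ 2 - n + 1) ∧
    (n : ℚ) / (n ^ 2 - n + 1) > 1 / n := by
  have hbxZ : 0 < bx := by linarith
  have hn1 : (1 : ℚ) < n := by exact_mod_cast hn
  have hnQ : (0 : ℚ) < n := by linarith
  have hbxQ : (0 : ℚ) < bx := by exact_mod_cast hbxZ
  have hDQ : (0 : ℚ) < (n : ℚ) ^ 2 - n + 1 := by nlinarith
  constructor
  · have hD : (0:ℤ) < n ^ 2 - n + 1 := by nlinarith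
    have h1 : 0 ≤ (cy - n) * (bx - cx) * (n ^ 2 - n + 1) :=
      mul_nonneg (mul_nonneg (by linarith) (by linarith)) (by linarith)
    have h2 : 0 ≤ n * ((bx - cx) * ((n ^ 2 - n + 1) - (cx + 1))) :=
      mul_nonneg (by linarith) (mul_nonneg (by linarith) (by nlinarith))
    have h3 : 0 ≤ n * ((bx - cx - 1) * cx) :=
      mul_nonneg (by linarith) (mul_nonneg (by linarith) hcx0)
    have key : n * bx ≤ cy * (bx - cx) * (n ^ 2 - n + 1) := by nlinarith [h1, h2, h3]
    have keyQ : (n : ℚ) * bx ≤ (cy : ℚ) * ((bx : ℚ) - cx) * ((n : ℚ) ^ 2 - n + 1) := by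
      exact_mod_cast key
    have heq : (cy : ℚ) - cy * cx / bx = (cy : ℚ) * ((bx : ℚ) - cx) / bx := by
      field_simp
    rw [ge_iff_le, heq, div_le_div_iff₀ hDQ hbxQ]
    linarith [keyQ]
  · rw [gt_iff_lt, div_lt_div_iff₀ hnQ hDQ]
    nlinarith
end

section
/- Let a, b, u be three distinct points in the plane forming a nondegenerate triangle. Then there exists a point c strictly inside triangle (a, b, u) lying on the circle with diameter au or on the circle with diameter bu. -/
/-!
On a triangle, `x ↦ ⟪a - x, u - x⟫` vanishes exactly on the Thales circle over `au`, is negative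
at the midpoint of `au` and positive at `b` iff the angle at `b` is acute. The two base angles at
`a` and `b` cannot both be non-acute, since `⟪a - b, u - b⟫ + ⟪b - a, u - a⟫ = ‖a - b‖²`. For an
acute one, the intermediate value theorem on the (connected) interior of the triangle gives a
zero of the corresponding function there.
-/

open Set Module EuclideanGeometry
open scoped RealInnerProductSpace

section InnerProductSpace

variable {V : Type*} [NormedAddCommGroup V] [InnerProductSpace ℝ V]

theorem dist_midpoint_eq_half_dist_iff_inner_eq_zero (a u c : V) :
    dist c (midpoint ℝ a u) = dist a u / 2 ↔ ⟪a - c, u - c⟫ = 0 :=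
  calc _ ↔ c ∈ Sphere.ofDiameter a u := Iff.rfl
    _ ↔ ∠ a c u = Real.pi / 2 := Sphere.angle_eq_pi_div_two_iff_mem_sphere_ofDiameter.symm
    _ ↔ _ := (InnerProductGeometry.inner_eq_zero_iff_angle_eq_pi_div_two _ _).symm

theorem inner_sub_midpoint_sub_midpoint_neg {a u : V} (h : a ≠ u) :
    ⟪a - midpoint ℝ a u, u - midpoint ℝ a u⟫ < 0 := by
  rw [left_sub_midpoint, right_sub_midpoint, real_inner_smul_left, real_inner_smul_right,
    ← neg_sub a u, inner_neg_right, real_inner_self_eq_norm_sq]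
  have : 0 < ‖a - u‖ := norm_pos_iff.2 (sub_ne_zero.2 h)
  norm_num
  positivity

theorem inner_sub_sub_pos_or_inner_sub_sub_pos {a b : V} (h : a ≠ b) (u : V) :
    0 < ⟪a - b, u - b⟫ ∨ 0 < ⟪b - a, u - a⟫ := by
  have hsum : ⟪a - b, u - b⟫ + ⟪b - a, u - a⟫ = ‖a - b‖ ^ 2 := by
    rw [← neg_sub a b, inner_neg_left, ← sub_eq_add_neg, ← inner_sub_right,
      sub_sub_sub_cancel_left, real_inner_self_eq_norm_sq]
  by_contra! hle
  have : 0 < ‖a - b‖ := norm_pos_iff.2 (sub_ne_zero.2 h)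
  nlinarith [hle.1, hle.2]

theorem AffineIndependent.interior_convexHull_range_nonempty [FiniteDimensional ℝ V] {n : ℕ}
    {p : Fin (n + 1) → V} (hp : AffineIndependent ℝ p) (hn : finrank ℝ V = n) :
    (interior (convexHull ℝ (range p))).Nonempty := by
  rw [interior_convexHull_nonempty_iff_affineSpan_eq_top,
    hp.affineSpan_eq_top_iff_card_eq_finrank_add_one, Fintype.card_fin, hn]

end InnerProductSpace

theorem Convex.exists_mem_interior_eq_zero {E : Type*} [AddCommGroup E] [Module ℝ E]
    [TopologicalSpace E] [IsTopologicalAddGroup E] [ContinuousSMul ℝ E] {s : Set E}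
    (hs : Convex ℝ s) (hs' : (interior s).Nonempty) {f : E → ℝ} (hf : Continuous f)
    {p q : E} (hp : p ∈ s) (hq : q ∈ s) (hfp : f p < 0) (hfq : 0 < f q) :
    ∃ c ∈ interior s, f c = 0 := by
  have hdense : s ⊆ closure (interior s) := by
    rw [hs.closure_interior_eq_closure_of_nonempty_interior hs']
    exact subset_closure
  obtain ⟨p', hp'neg, hp'⟩ := mem_closure_iff.1 (hdense hp) _ (isOpen_Iio.preimage hf) hfp
  obtain ⟨q', hq'pos, hq'⟩ := mem_closure_iff.1 (hdense hq) _ (isOpen_Ioi.preimage hf) hfq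
  exact hs.interior.isPreconnected.intermediate_value hp' hq' hf.continuousOn
    ⟨le_of_lt hp'neg, le_of_lt hq'pos⟩

/-- For any nondegenerate triangle `(a, b, u)` in the plane, there is a point `c`
strictly inside the triangle that lies on the circle with diameter `au` (the
Thales circle of `a` and `u`) or on the circle with diameter `bu`. -/
theorem exists_thales_point_in_triangle
    (a b u : EuclideanSpace ℝ (Fin 2))
    (h : AffineIndependent ℝ ![a, b, u]) :
    ∃ c ∈ interior (convexHull ℝ ({a, b, u} : Set (EuclideanSpace ℝ (Fin 2)))),
      dist c (midpoint ℝ a u) = dist a u / 2 ∨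
      dist c (midpoint ℝ b u) = dist b u / 2 := by
  set T := convexHull ℝ ({a, b, u} : Set (EuclideanSpace ℝ (Fin 2)))
  have hT : Convex ℝ T := convex_convexHull ℝ _
  have hint : (interior T).Nonempty := by
    have := h.interior_convexHull_range_nonempty (finrank_euclideanSpace_fin (n := 2))
    rwa [Matrix.range_cons, Matrix.range_cons, Matrix.range_cons, Matrix.range_empty,
      union_empty, singleton_union, singleton_union] at this
  have ha : a ∈ T := subset_convexHull ℝ _ (by simp)
  have hb : b ∈ T := subset_convexHull ℝ _ (by simp)
  have hmid : ∀ x ∈ T, midpoint ℝ x u ∈ T := fun x hx =>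
    hT.segment_subset hx (subset_convexHull ℝ _ (by simp)) (midpoint_mem_segment x u)
  have hab : a ≠ b := h.injective.ne (show (0 : Fin 3) ≠ 1 by decide)
  have hau : a ≠ u := h.injective.ne (show (0 : Fin 3) ≠ 2 by decide)
  have hbu : b ≠ u := h.injective.ne (show (1 : Fin 3) ≠ 2 by decide)
  rcases inner_sub_sub_pos_or_inner_sub_sub_pos hab u with hb_acute | ha_acute
  · obtain ⟨c, hc, hc0⟩ := hT.exists_mem_interior_eq_zero hint (f := fun x => ⟪a - x, u - x⟫)
      (by fun_prop) (hmid a ha) hb (inner_sub_midpoint_sub_midpoint_neg hau) hb_acute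
    exact ⟨c, hc, .inl ((dist_midpoint_eq_half_dist_iff_inner_eq_zero a u c).2 hc0)⟩
  · obtain ⟨c, hc, hc0⟩ := hT.exists_mem_interior_eq_zero hint (f := fun x => ⟪b - x, u - x⟫)
      (by fun_prop) (hmid b hb) ha (inner_sub_midpoint_sub_midpoint_neg hbu) ha_acute
    exact ⟨c, hc, .inr ((dist_midpoint_eq_half_dist_iff_inner_eq_zero b u c).2 hc0)⟩
end

section
/- Let c be a point and consider four rays from c in directions r₁, r₂, r₃, r₄ (in circular order), and four half-lines h₁, h₂, h₃, h₄ being the positive/negative coordinate axis directions from c. Suppose all four rays lie strictly inside one closed quadrant q. Then assigning the two 'inner' rays to the two axis half-lines bounding q (preserving circular order) and the two outer rays to the remaining two half-lines yields an assignment whose dependency chains have length at most 2 (dependency depth at most 1). -/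
open Real Set

/-!
Only the two inner edges can depend on anything: the sector of edge `1` reaches down to its
half-line and so can contain only edge `0`, the sector of edge `2` reaches up and can contain only
edge `3`. The outer edges `0` and `3` are rotated away from all the others, so their sectors are
empty of edges, and no chain can continue past them.
-/

section
variable {α : Type*} [LinearOrder α] {f A : Fin 4 → α}

theorem Monotone.apply_notMem_uIoo_zero (hf : Monotone f) (h0 : A 0 ≤ f 0) (k : Fin 4) :
    f k ∉ uIoo (f 0) (A 0) := by
  rw [uIoo_of_ge h0]
  exact fun hk => (hf (Fin.zero_le k)).not_gt hk.2

theorem Monotone.apply_notMem_uIoo_three (hf : Monotone f) (h3 : f 3 ≤ A 3) (k : Fin 4) :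
    f k ∉ uIoo (f 3) (A 3) := by
  rw [uIoo_of_le h3]
  exact fun hk => (hf (Fin.le_last k)).not_gt hk.1

theorem StrictMono.eq_zero_of_apply_mem_uIoo_one (hf : StrictMono f) (h1 : A 1 ≤ f 1)
    {j : Fin 4} (hj : f j ∈ uIoo (f 1) (A 1)) : j = 0 := by
  rw [uIoo_of_ge h1] at hj
  have hj : j < 1 := hf.lt_iff_lt.mp hj.2
  omega

theorem StrictMono.eq_three_of_apply_mem_uIoo_two (hf : StrictMono f) (h2 : f 2 ≤ A 2)
    {j : Fin 4} (hj : f j ∈ uIoo (f 2) (A 2)) : j = 3 := by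
  rw [uIoo_of_le h2] at hj
  have hj : 2 < j := hf.lt_iff_lt.mp hj.1
  omega

theorem StrictMono.not_apply_mem_uIoo_chain (hf : StrictMono f) (h0 : A 0 ≤ f 0)
    (h1 : A 1 ≤ f 1) (h2 : f 2 ≤ A 2) (h3 : f 3 ≤ A 3) {i j : Fin 4}
    (hij : f j ∈ uIoo (f i) (A i)) (k : Fin 4) : f k ∉ uIoo (f j) (A j) := by
  have hj : j = 0 ∨ j = 3 := by
    fin_cases i
    · exact absurd hij (hf.monotone.apply_notMem_uIoo_zero h0 j)
    · exact .inl (hf.eq_zero_of_apply_mem_uIoo_one h1 hij)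
    · exact .inr (hf.eq_three_of_apply_mem_uIoo_two h2 hij)
    · exact absurd hij (hf.monotone.apply_notMem_uIoo_three h3 j)
  obtain rfl | rfl := hj
  · exact hf.monotone.apply_notMem_uIoo_zero h0 k
  · exact hf.monotone.apply_notMem_uIoo_three h3 k

end

/-- Case 1 of the assignment procedure of the 1-planar RAC₂ algorithm.  The four
edges incident to the crossing vertex are represented by their angles
`θ 0 < θ 1 < θ 2 < θ 3` (circular order), all lying strictly inside one quadrant
(w.l.o.g. the first quadrant `(0, π/2)`).  The four axis-parallel half-lines are
represented by the angles `-π/2, 0, π/2, π`; assigning the two inner edges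
`θ 1, θ 2` to the two half-lines `0, π/2` bounding the quadrant (preserving
circular order) forces `A = ![-π/2, 0, π/2, π]`.  Edge `i` depends on edge `j`
iff `θ j` lies strictly in the angular sector between `θ i` and the assigned
half-line `A i`.  The resulting dependency relation has no chain of three edges
(dependency depth at most 1). -/
theorem assignment_case1_dependency_depth
    (θ : Fin 4 → ℝ)
    (h0 : 0 < θ 0) (h01 : θ 0 < θ 1) (h12 : θ 1 < θ 2) (h23 : θ 2 < θ 3)
    (h3 : θ 3 < π / 2) :
    let A : Fin 4 → ℝ := ![-(π / 2), 0, π / 2, π]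
    let depends : Fin 4 → Fin 4 → Prop := fun i j =>
      θ j ∈ Set.Ioo (min (θ i) (A i)) (max (θ i) (A i))
    ∀ i j k : Fin 4, depends i j → ¬ depends j k := by
  intro A depends i j k hij
  have hθ : StrictMono θ := Fin.strictMono_iff_lt_succ.2 fun i => by fin_cases i <;> assumption
  have hπ := pi_pos
  have hA0 : A 0 ≤ θ 0 := show -(π / 2) ≤ θ 0 by linarith
  have hA1 : A 1 ≤ θ 1 := show 0 ≤ θ 1 by linarith
  have hA2 : θ 2 ≤ A 2 := show θ 2 ≤ π / 2 by linarith
  have hA3 : θ 3 ≤ A 3 := show θ 3 ≤ π by linarith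
  exact hθ.not_apply_mem_uIoo_chain hA0 hA1 hA2 hA3 hij k
end
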